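/- Derivation of fractional Euler-Lagrange equations from the fractional Hamiltonian system: if (q,u,p) satisfies ₐD_t^α q = ∂H/∂p, ₜD_b^α p = ∂H/∂q, and ∂H/∂u = 0 with H(t,q,u,p) = L(t,q,u) + p·u (i.e., φ(t,q,u) = u), then q satisfies the fractional Euler-Lagrange equation ∂₂L(t,q, ₐD_t^α q) + ₜD_b^α ∂₃L(t,q, ₐD_t^α q) = 0. -/

import Mathlib

/-- Left Riemann-Liouville fractional derivative of order `α`, with `n-1 ≤ α < n`. -/
noncomputable def leftRL (a α : ℝ) (n : ℕ) (f : ℝ → ℝ) (t : ℝ) : ℝ :=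
  (1 / Real.Gamma ((n : ℝ) - α)) *
    deriv^[n] (fun s => ∫ θ in a..s, (s - θ) ^ ((n : ℝ) - α - 1) * f θ) t

/-- Right Riemann-Liouville fractional derivative of order `α`, with `n-1 ≤ α < n`. -/
noncomputable def rightRL (b α : ℝ) (n : ℕ) (f : ℝ → ℝ) (t : ℝ) : ℝ :=
  (1 / Real.Gamma ((n : ℝ) - α)) * (-1 : ℝ) ^ n *
    deriv^[n] (fun s => ∫ θ in s..b, (θ - s) ^ ((n : ℝ) - α - 1) * f θ) t

/-- `i`-th component of `∂₂L(t,x,v)`, the partial gradient of `L` in its second argument. -/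
noncomputable def partial2 {n : ℕ} (L : ℝ → (Fin n → ℝ) → (Fin n → ℝ) → ℝ)
    (t : ℝ) (x v : Fin n → ℝ) (i : Fin n) : ℝ :=
  deriv (fun y => L t (Function.update x i y) v) (x i)

/-- `i`-th component of `∂₃L(t,x,v)`, the partial gradient of `L` in its third argument. -/
noncomputable def partial3 {n : ℕ} (L : ℝ → (Fin n → ℝ) → (Fin n → ℝ) → ℝ)
    (t : ℝ) (x v : Fin n → ℝ) (i : Fin n) : ℝ :=
  deriv (fun y => L t x (Function.update v i y)) (v i)

lemma rightRL_neg (b α : ℝ) (m : ℕ) (f : ℝ → ℝ) (t : ℝ) :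
    rightRL b α m (fun s => -f s) t = -rightRL b α m f t := by
  simp only [rightRL, ← iteratedDeriv_eq_iterate, mul_neg, intervalIntegral.integral_neg,
    iteratedDeriv_fun_neg]

theorem fractional_euler_lagrange_from_hamiltonian_general {n : ℕ}
    (a b α : ℝ)
    (L : ℝ → (Fin n → ℝ) → (Fin n → ℝ) → ℝ)
    (q u p : ℝ → Fin n → ℝ)
    (hq : ∀ t, ∀ i, leftRL a α 1 (fun s => q s i) t = u t i)
    (hp : ∀ t, ∀ i, rightRL b α 1 (fun s => p s i) t = partial2 L t (q t) (u t) i)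
    (hstat : ∀ t, ∀ i, partial3 L t (q t) (u t) i + p t i = 0) :
    ∀ t, ∀ i,
      partial2 L t (q t) (fun j => leftRL a α 1 (fun s => q s j) t) i
        + rightRL b α 1
            (fun s => partial3 L s (q s) (fun j => leftRL a α 1 (fun r => q r j) s) i) t
        = 0 := by
  intro t i
  have hu : ∀ s, (fun j => leftRL a α 1 (fun r => q r j) s) = u s := fun s => funext (hq s)
  have hmomentum : (fun s => partial3 L s (q s) (u s) i) = fun s => -p s i :=
    funext fun s => eq_neg_of_add_eq_zero_left (hstat s i)
  simp only [hu, hmomentum, rightRL_neg, hp, add_neg_cancel]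

/-- If `(q,u,p)` satisfies the fractional Hamiltonian system
`ₐD_t^α q = ∂H/∂p = u`, `ₜD_b^α p = ∂H/∂q = ∂₂L`, `∂H/∂u = ∂₃L + p = 0`, with
`H(t,q,u,p) = L(t,q,u) + p·u` (i.e. `φ(t,q,u) = u`), then `q` satisfies the
fractional Euler-Lagrange equation
`∂₂L(t,q,ₐD_t^α q) + ₜD_b^α ∂₃L(t,q,ₐD_t^α q) = 0`. -/
theorem fractional_euler_lagrange_from_hamiltonian {n : ℕ}
    (a b α : ℝ) (hα : 0 < α) (hα' : α ≤ 1)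
    (L : ℝ → (Fin n → ℝ) → (Fin n → ℝ) → ℝ)
    (hL : ContDiff ℝ 2 (fun z : ℝ × (Fin n → ℝ) × (Fin n → ℝ) => L z.1 z.2.1 z.2.2))
    (q u p : ℝ → Fin n → ℝ)
    (hq : ∀ t, ∀ i, leftRL a α 1 (fun s => q s i) t = u t i)
    (hp : ∀ t, ∀ i, rightRL b α 1 (fun s => p s i) t = partial2 L t (q t) (u t) i)
    (hstat : ∀ t, ∀ i, partial3 L t (q t) (u t) i + p t i = 0) :
    ∀ t, ∀ i,
      partial2 L t (q t) (fun j => leftRL a α 1 (fun s => q s j) t) i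
        + rightRL b α 1
            (fun s => partial3 L s (q s) (fun j => leftRL a α 1 (fun r => q r j) s) i) t
        = 0 :=
  fractional_euler_lagrange_from_hamiltonian_general a b α L q u p hq hp hstat
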